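/- Suppose f is irreducible in ℤ[u^{±1}], noncyclotomic, and hyperbolic. Then: (1) for every v ∈ ℓ^∞(ℤ,ℤ) the series ξ̄(v) = Σ_{n∈ℤ} v_n σ̄^{−n}(w^Δ) converges coordinatewise absolutely to an element of W_f, and v ↦ ξ̄(v) is an additive, shift-equivariant map with f(σ̄)(ξ̄(v)) = v for all v; consequently V_f = f(σ̄)(W_f) equals all of ℓ^∞(ℤ,ℤ). (2) The map ξ = ρ ∘ ξ̄ : ℓ^∞(ℤ,ℤ) → X_f is a surjective, shift-equivariant group homomorphism whose kernel is f(σ̄)(ℓ^∞(ℤ,ℤ)). -/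

import Mathlib

/-!
Over `ℂ`, `f = c ∏ (X - θ)` with every `|θ| ≠ 1`. For a single factor, a bounded sequence `e`
with `e (n + 1) - θ e n = v n` vanishes when `v = 0` (the sup of `|e|` is contracted by `|θ|` or
`|θ|⁻¹`), and is absolutely summable when `v` is (the same contraction bounds every window sum
of `|e|` in terms of the sup of `|e|` and `Σ |v|`). Peeling off the factors one at a time, bounded
solutions of `f(σ̄) w = 0` vanish and the bounded solution `w^Δ` is absolutely summable. Then
`ξ̄(v) = w^Δ * v` is a bounded solution of `f(σ̄) w = v`, so `ξ̄(f(σ̄) w) = w` for every bounded `w`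
with `f(σ̄) w` integral; applied to lifts of points of `X_f` and to integer sequences, this gives
the surjectivity and the kernel of `ξ`.
-/

open Filter Topology Polynomial

noncomputable section

/-- The circle `ℝ/ℤ`. -/
abbrev Torus := AddCircle (1 : ℝ)

/-- `f(σ)` acting on `𝕋^ℤ`. -/
def fsT (f : Polynomial ℤ) (x : ℤ → Torus) : ℤ → Torus :=
  fun n => ∑ k ∈ Finset.range (f.natDegree + 1), f.coeff k • x (n + (k : ℤ))

/-- `X_f = ker f(σ) ⊆ 𝕋^ℤ`. -/
def Xf (f : Polynomial ℤ) : Set (ℤ → Torus) := {x | ∀ n, fsT f x n = 0}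

/-- The shift `σ̄` on real sequences. -/
def shiftR (w : ℤ → ℝ) : ℤ → ℝ := fun n => w (n + 1)

/-- The shift on integer sequences. -/
def shiftZseq (v : ℤ → ℤ) : ℤ → ℤ := fun n => v (n + 1)

/-- `f(σ̄)` on real sequences. -/
def fsR (f : Polynomial ℤ) (w : ℤ → ℝ) : ℤ → ℝ :=
  fun n => ∑ k ∈ Finset.range (f.natDegree + 1), (f.coeff k : ℝ) * w (n + (k : ℤ))

/-- Bounded real sequences. -/
def Bdd (w : ℤ → ℝ) : Prop := ∃ B : ℝ, ∀ n, |w n| ≤ B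

/-- Bounded integer sequences. -/
def BddZ (v : ℤ → ℤ) : Prop := ∃ B : ℤ, ∀ n, |v n| ≤ B

/-- The sequence `v^Δ`. -/
def vDelta : ℤ → ℝ := fun n => if n = 0 then 1 else 0

/-- Coordinatewise reduction mod 1. -/
def rhoT (w : ℤ → ℝ) : ℤ → Torus := fun n => (w n : Torus)

/-- `f` is noncyclotomic. -/
def Noncyclotomic (f : Polynomial ℤ) : Prop :=
  ∀ θ : ℂ, Polynomial.aeval θ f = 0 → ∀ n : ℕ, 0 < n → θ ^ n ≠ 1

/-- `w^Δ`: bounded, `f(σ̄) w = v^Δ`, `w_n → 0` as `|n| → ∞`. -/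
def IsWdelta (f : Polynomial ℤ) (w : ℤ → ℝ) : Prop :=
  Bdd w ∧ fsR f w = vDelta ∧ Tendsto w cofinite (nhds 0)

/-- `ξ̄(v)_k = ∑_{n∈ℤ} v_n w^Δ_{k-n}`, i.e. `ξ̄(v) = ∑_n v_n σ̄^{-n} w^Δ`. -/
def xiBar (wd : ℤ → ℝ) (v : ℤ → ℤ) : ℤ → ℝ :=
  fun k => ∑' n : ℤ, (v n : ℝ) * wd (k - n)

open Set

theorem sum_range_le_of_le_mul_add {a b : ℤ → ℝ} {r B : ℝ} (hr0 : 0 ≤ r) (hr : r < 1)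
    (ha0 : ∀ n, 0 ≤ a n) (haB : ∀ n, a n ≤ B) (hb : Summable b) (hb0 : ∀ n, 0 ≤ b n)
    (h : (∀ n, a (n + 1) ≤ r * a n + b n) ∨ ∀ n, a n ≤ r * a (n + 1) + b n) (c : ℤ) (M : ℕ) :
    ∑ i ∈ Finset.range M, a (c + i) ≤ (B + ∑' n, b n) / (1 - r) := by
  set s := ∑ i ∈ Finset.range M, a (c + i)
  set s' := ∑ i ∈ Finset.range M, a (c + i + 1)
  have hshift : s' + a c = s + a (c + M) := by
    have h1 := Finset.sum_range_succ' (fun i => a (c + i)) M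
    rw [Finset.sum_range_succ] at h1
    simpa [← add_assoc] using h1.symm
  have hbT : ∑ i ∈ Finset.range M, b (c + i) ≤ ∑' n, b n :=
    (Finset.sum_map _ ⟨fun i : ℕ => c + i, fun i j hij => by simpa using hij⟩ b).symm.le.trans
      (hb.sum_le_tsum _ fun n _ => hb0 n)
  have hB0 : 0 ≤ B := (ha0 0).trans (haB 0)
  rw [le_div_iff₀ (by linarith)]
  rcases h with h | h
  · have : s' ≤ r * s + ∑ i ∈ Finset.range M, b (c + i) := by
      rw [Finset.mul_sum, ← Finset.sum_add_distrib]
      exact Finset.sum_le_sum fun i _ => h _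
    nlinarith [ha0 (c + M), haB c]
  · have : s ≤ r * s' + ∑ i ∈ Finset.range M, b (c + i) := by
      rw [Finset.mul_sum, ← Finset.sum_add_distrib]
      exact Finset.sum_le_sum fun i _ => h _
    nlinarith [ha0 c, haB (c + M)]

theorem summable_of_le_mul_add {a b : ℤ → ℝ} {r B : ℝ} (hr0 : 0 ≤ r) (hr : r < 1)
    (ha0 : ∀ n, 0 ≤ a n) (haB : ∀ n, a n ≤ B) (hb : Summable b) (hb0 : ∀ n, 0 ≤ b n)
    (h : (∀ n, a (n + 1) ≤ r * a n + b n) ∨ ∀ n, a n ≤ r * a (n + 1) + b n) : Summable a := by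
  obtain ⟨C, hwin⟩ : ∃ C, ∀ (c : ℤ) (M : ℕ), ∑ i ∈ Finset.range M, a (c + i) ≤ C :=
    ⟨_, sum_range_le_of_le_mul_add hr0 hr ha0 haB hb hb0 h⟩
  refine .of_nat_of_neg (summable_of_sum_range_le (c := C) (fun _ => ha0 _) fun M => ?_)
    (summable_of_sum_range_le (c := C) (fun _ => ha0 _) fun M => ?_)
  · simpa using hwin 0 M
  · rw [← Finset.sum_range_reflect]
    refine le_of_eq_of_le (Finset.sum_congr rfl fun i hi => ?_) (hwin (1 - M) M)
    rw [Finset.mem_range] at hi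
    congr 1
    rw [Nat.sub_sub, Nat.cast_sub (by omega)]
    push_cast
    ring

theorem eq_zero_of_le_mul_of_bddAbove {ι : Type*} {a : ι → ℝ} {r : ℝ} (hr0 : 0 ≤ r)
    (hr : r < 1) (ha0 : ∀ n, 0 ≤ a n) (ha : BddAbove (range a)) (h : ∀ n, ∃ m, a n ≤ r * a m) :
    a = 0 := by
  funext n
  have hle : ∀ k, a k ≤ r * ⨆ m, a m := fun k =>
    let ⟨m, hm⟩ := h k
    hm.trans (mul_le_mul_of_nonneg_left (le_ciSup ha m) hr0)
  have hsup : ⨆ m, a m ≤ r * ⨆ m, a m := by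
    have : Nonempty ι := ⟨n⟩
    exact ciSup_le hle
  have := hle n
  have := ha0 n
  simp only [Pi.zero_apply]
  nlinarith

section
variable {𝕜 : Type*} [NormedField 𝕜]

def seqShift : Module.End 𝕜 (ℤ → 𝕜) := LinearMap.funLeft 𝕜 𝕜 (· + 1)

theorem seqShift_pow_apply (k : ℕ) (e : ℤ → 𝕜) (n : ℤ) : (seqShift ^ k) e n = e (n + k) := by
  induction k generalizing e n with
  | zero => simp
  | succ k ih =>
    rw [pow_succ, Module.End.mul_apply, ih, seqShift, LinearMap.funLeft_apply]
    push_cast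
    ring_nf

theorem aeval_seqShift_apply {R : Type*} [CommRing R] [Algebra R 𝕜] (p : R[X]) (e : ℤ → 𝕜)
    (n : ℤ) :
    aeval seqShift p e n =
      ∑ k ∈ Finset.range (p.natDegree + 1), algebraMap R 𝕜 (p.coeff k) * e (n + k) := by
  simp [aeval_eq_sum_range, seqShift_pow_apply, Algebra.smul_def]

theorem aeval_seqShift_X_sub_C_apply (θ : 𝕜) (e : ℤ → 𝕜) (n : ℤ) :
    aeval seqShift (X - C θ) e n = e (n + 1) - θ * e n := by
  simp [seqShift]

theorem eq_zero_of_bddAbove_of_shift_eq_mul {θ : 𝕜} (hθ : ‖θ‖ ≠ 1) {e : ℤ → 𝕜}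
    (he : BddAbove (range fun n => ‖e n‖)) (h : ∀ n, e (n + 1) = θ * e n) : e = 0 := by
  suffices (fun n => ‖e n‖) = 0 from funext fun n => norm_eq_zero.1 (congrFun this n)
  rcases hθ.lt_or_gt with hlt | hgt
  · refine eq_zero_of_le_mul_of_bddAbove (norm_nonneg θ) hlt (fun _ => norm_nonneg _) he
      fun n => ⟨n - 1, ?_⟩
    rw [← norm_mul, ← h, sub_add_cancel]
  · have hθ0 : 0 < ‖θ‖ := one_pos.trans hgt
    refine eq_zero_of_le_mul_of_bddAbove (inv_nonneg.2 hθ0.le) (inv_lt_one_of_one_lt₀ hgt)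
      (fun _ => norm_nonneg _) he fun n => ⟨n + 1, ?_⟩
    rw [h, norm_mul, inv_mul_cancel_left₀ hθ0.ne']

theorem summable_norm_of_bddAbove_of_shift_sub_mul {θ : 𝕜} (hθ : ‖θ‖ ≠ 1) {e : ℤ → 𝕜}
    (he : BddAbove (range fun n => ‖e n‖)) (hv : Summable fun n => ‖e (n + 1) - θ * e n‖) :
    Summable fun n => ‖e n‖ := by
  obtain ⟨B, hB⟩ := he
  have haB : ∀ n, ‖e n‖ ≤ B := fun n => hB ⟨n, rfl⟩
  rcases hθ.lt_or_gt with hlt | hgt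
  · refine summable_of_le_mul_add (norm_nonneg θ) hlt (fun _ => norm_nonneg _) haB hv
      (fun _ => norm_nonneg _) (.inl fun n => ?_)
    calc ‖e (n + 1)‖ = ‖θ * e n + (e (n + 1) - θ * e n)‖ := by rw [add_sub_cancel]
      _ ≤ ‖θ‖ * ‖e n‖ + ‖e (n + 1) - θ * e n‖ := (norm_add_le _ _).trans_eq (by rw [norm_mul])
  · have hθ0 : 0 < ‖θ‖ := one_pos.trans hgt
    refine summable_of_le_mul_add (inv_nonneg.2 hθ0.le) (inv_lt_one_of_one_lt₀ hgt)
      (fun _ => norm_nonneg _) haB (hv.mul_left ‖θ‖⁻¹) (fun _ => by positivity)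
      (.inr fun n => ?_)
    calc ‖e n‖ = ‖θ⁻¹ * (e (n + 1) - (e (n + 1) - θ * e n))‖ := by
          rw [sub_sub_cancel, inv_mul_cancel_left₀ (norm_pos_iff.1 hθ0)]
      _ ≤ ‖θ‖⁻¹ * ‖e (n + 1)‖ + ‖θ‖⁻¹ * ‖e (n + 1) - θ * e n‖ := by
          rw [norm_mul, norm_inv, ← mul_add]
          exact mul_le_mul_of_nonneg_left (norm_sub_le _ _) (by positivity)

theorem bddAbove_shift_sub_mul (θ : 𝕜) {e : ℤ → 𝕜} (he : BddAbove (range fun n => ‖e n‖)) :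
    BddAbove (range fun n => ‖e (n + 1) - θ * e n‖) := by
  obtain ⟨B, hB⟩ := he
  refine ⟨B + ‖θ‖ * B, forall_mem_range.2 fun n => ?_⟩
  have h1 : ‖e (n + 1)‖ ≤ B := hB ⟨_, rfl⟩
  have h2 : ‖e n‖ ≤ B := hB ⟨_, rfl⟩
  calc ‖e (n + 1) - θ * e n‖ ≤ ‖e (n + 1)‖ + ‖θ‖ * ‖e n‖ :=
        (norm_sub_le _ _).trans_eq (by rw [norm_mul])
    _ ≤ B + ‖θ‖ * B := by gcongr

theorem of_aeval_seqShift_multiset_prod {P : (ℤ → 𝕜) → Prop}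
    (hP : ∀ θ : 𝕜, ‖θ‖ ≠ 1 → ∀ e : ℤ → 𝕜, BddAbove (range fun n => ‖e n‖) →
      P (fun n => e (n + 1) - θ * e n) → P e)
    (s : Multiset 𝕜) (hs : ∀ θ ∈ s, ‖θ‖ ≠ 1) {e : ℤ → 𝕜}
    (he : BddAbove (range fun n => ‖e n‖)) (h : P (aeval seqShift (s.map (X - C ·)).prod e)) :
    P e := by
  induction s using Multiset.induction_on generalizing e with
  | empty => simpa using h
  | cons θ s ih =>
    have hθ := hs θ (Multiset.mem_cons_self θ s)
    refine hP θ hθ e he (ih (fun θ' h' => hs θ' (Multiset.mem_cons_of_mem h'))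
      (bddAbove_shift_sub_mul θ he) ?_)
    convert h using 1
    rw [Multiset.map_cons, Multiset.prod_cons, mul_comm, map_mul, Module.End.mul_apply]
    congr 1
    funext n
    rw [aeval_seqShift_X_sub_C_apply]

end

section
variable {𝕜 : Type*} [NormedField 𝕜] [IsAlgClosed 𝕜] {p : 𝕜[X]}

theorem aeval_seqShift_eq_smul_prod_roots (p : 𝕜[X]) (e : ℤ → 𝕜) :
    aeval seqShift p e = p.leadingCoeff • aeval seqShift (p.roots.map (X - C ·)).prod e := by
  conv_lhs => rw [← C_leadingCoeff_mul_prod_multiset_X_sub_C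
    (splits_iff_card_roots.1 (IsAlgClosed.splits p))]
  rw [map_mul, Module.End.mul_apply, aeval_C, Module.algebraMap_end_apply]

theorem eq_zero_of_bddAbove_of_aeval_seqShift_eq_zero (hp0 : p ≠ 0)
    (hp : ∀ θ, p.IsRoot θ → ‖θ‖ ≠ 1) {e : ℤ → 𝕜} (he : BddAbove (range fun n => ‖e n‖))
    (h : aeval seqShift p e = 0) : e = 0 := by
  refine of_aeval_seqShift_multiset_prod (P := (· = 0))
    (fun θ hθ e he h =>
      eq_zero_of_bddAbove_of_shift_eq_mul hθ he fun n => sub_eq_zero.1 (congrFun h n))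
    p.roots (fun θ hθ => hp θ (isRoot_of_mem_roots hθ)) he ?_
  rw [aeval_seqShift_eq_smul_prod_roots] at h
  exact (smul_eq_zero.1 h).resolve_left (leadingCoeff_ne_zero.2 hp0)

theorem summable_norm_of_bddAbove_of_aeval_seqShift (hp0 : p ≠ 0)
    (hp : ∀ θ, p.IsRoot θ → ‖θ‖ ≠ 1) {e : ℤ → 𝕜} (he : BddAbove (range fun n => ‖e n‖))
    (h : Summable fun n => ‖aeval seqShift p e n‖) : Summable fun n => ‖e n‖ := by
  refine of_aeval_seqShift_multiset_prod (P := fun x => Summable fun n => ‖x n‖)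
    (fun θ hθ e he h => summable_norm_of_bddAbove_of_shift_sub_mul hθ he h)
    p.roots (fun θ hθ => hp θ (isRoot_of_mem_roots hθ)) he ?_
  have hlc : ‖p.leadingCoeff‖ ≠ 0 := norm_ne_zero_iff.2 (leadingCoeff_ne_zero.2 hp0)
  refine (h.mul_left ‖p.leadingCoeff‖⁻¹).congr fun n => ?_
  rw [aeval_seqShift_eq_smul_prod_roots, Pi.smul_apply, norm_smul, inv_mul_cancel_left₀ hlc]

end

theorem fsR_sub (f : ℤ[X]) (w₁ w₂ : ℤ → ℝ) : fsR f (w₁ - w₂) = fsR f w₁ - fsR f w₂ := by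
  funext n
  simp [fsR, mul_sub, Finset.sum_sub_distrib]

theorem Bdd.sub {w₁ w₂ : ℤ → ℝ} (h₁ : Bdd w₁) (h₂ : Bdd w₂) : Bdd (w₁ - w₂) := by
  obtain ⟨B₁, hB₁⟩ := h₁
  obtain ⟨B₂, hB₂⟩ := h₂
  exact ⟨B₁ + B₂, fun n => (abs_sub _ _).trans (add_le_add (hB₁ n) (hB₂ n))⟩

theorem Bdd.fsR {w : ℤ → ℝ} (f : ℤ[X]) (hw : Bdd w) : Bdd (fsR f w) := by
  obtain ⟨B, hB⟩ := hw
  refine ⟨∑ k ∈ Finset.range (f.natDegree + 1), |(f.coeff k : ℝ)| * B, fun n => ?_⟩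
  refine (Finset.abs_sum_le_sum_abs _ _).trans (Finset.sum_le_sum fun k _ => ?_)
  rw [abs_mul]
  exact mul_le_mul_of_nonneg_left (hB _) (abs_nonneg _)

theorem Bdd.bddAbove_norm_ofReal {w : ℤ → ℝ} (hw : Bdd w) :
    BddAbove (range fun n => ‖(w n : ℂ)‖) := by
  obtain ⟨B, hB⟩ := hw
  exact ⟨B, forall_mem_range.2 fun n => by simpa using hB n⟩

theorem aeval_seqShift_ofReal (f : ℤ[X]) (w : ℤ → ℝ) :
    aeval seqShift (f.map (algebraMap ℤ ℂ)) (fun n => (w n : ℂ)) = fun n => (fsR f w n : ℂ) := by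
  funext n
  rw [aeval_map_algebraMap, aeval_seqShift_apply, fsR]
  push_cast
  simp only [eq_intCast]

theorem ne_zero_of_fsR_eq_vDelta {f : ℤ[X]} {w : ℤ → ℝ} (h : fsR f w = vDelta) : f ≠ 0 := by
  rintro rfl
  simpa [fsR, vDelta] using congrFun h 0

section
variable {f : ℤ[X]} (hf : ∀ θ : ℂ, aeval θ f = 0 → ‖θ‖ ≠ 1)
include hf

theorem norm_ne_one_of_isRoot_map {θ : ℂ} (hθ : (f.map (algebraMap ℤ ℂ)).IsRoot θ) : ‖θ‖ ≠ 1 :=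
  hf θ (by rwa [IsRoot, eval_map_algebraMap] at hθ)

theorem eq_of_bdd_of_fsR_eq (hf0 : f ≠ 0) {w₁ w₂ : ℤ → ℝ} (h₁ : Bdd w₁) (h₂ : Bdd w₂)
    (h : fsR f w₁ = fsR f w₂) : w₁ = w₂ := by
  have hzero := eq_zero_of_bddAbove_of_aeval_seqShift_eq_zero
    ((Polynomial.map_ne_zero_iff (algebraMap ℤ ℂ).injective_int).2 hf0)
    (fun _ => norm_ne_one_of_isRoot_map hf) (h₁.sub h₂).bddAbove_norm_ofReal
    (by rw [aeval_seqShift_ofReal, fsR_sub, h, sub_self]; ext; simp)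
  funext n
  simpa [sub_eq_zero] using congrFun hzero n

theorem summable_abs_of_fsR_eq_vDelta {w : ℤ → ℝ} (hw : Bdd w) (h : fsR f w = vDelta) :
    Summable fun n => |w n| := by
  have hsum := summable_norm_of_bddAbove_of_aeval_seqShift
    ((Polynomial.map_ne_zero_iff (algebraMap ℤ ℂ).injective_int).2 (ne_zero_of_fsR_eq_vDelta h))
    (fun _ => norm_ne_one_of_isRoot_map hf) hw.bddAbove_norm_ofReal
    (by
      rw [aeval_seqShift_ofReal, h]
      refine summable_of_ne_finset_zero (s := {0}) fun n hn => ?_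
      simp [vDelta, Finset.mem_singleton.not.1 hn])
  simpa using hsum

end

theorem BddZ.bdd_intCast {v : ℤ → ℤ} (hv : BddZ v) : Bdd fun n => (v n : ℝ) := by
  obtain ⟨B, hB⟩ := hv
  exact ⟨B, fun n => show |(v n : ℝ)| ≤ B by exact_mod_cast hB n⟩

theorem BddZ.of_bdd_intCast {v : ℤ → ℤ} (hv : Bdd fun n => (v n : ℝ)) : BddZ v := by
  obtain ⟨B, hB⟩ := hv
  refine ⟨⌈B⌉, fun n => ?_⟩
  have : |(v n : ℝ)| ≤ ⌈B⌉ := (hB n).trans (Int.le_ceil B)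
  exact_mod_cast this

section
variable {wd : ℤ → ℝ} (hwd : Summable fun n => |wd n|) {v : ℤ → ℤ} (hv : BddZ v)
include hwd hv

theorem summable_abs_mul_sub (k : ℤ) : Summable fun n => |(v n : ℝ) * wd (k - n)| := by
  obtain ⟨B, hB⟩ := hv.bdd_intCast
  refine (((Equiv.subLeft k).summable_iff.2 hwd).mul_left B).of_nonneg_of_le
    (fun _ => abs_nonneg _) fun n => ?_
  rw [abs_mul]
  exact mul_le_mul_of_nonneg_right (hB n) (abs_nonneg _)

theorem bdd_xiBar : Bdd (xiBar wd v) := by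
  obtain ⟨B, hB⟩ := hv.bdd_intCast
  refine ⟨B * ∑' n, |wd n|, fun k => ?_⟩
  calc |xiBar wd v k| ≤ ∑' n, |(v n : ℝ) * wd (k - n)| :=
        norm_tsum_le_tsum_norm (f := fun n => (v n : ℝ) * wd (k - n))
          (summable_abs_mul_sub hwd hv k)
    _ ≤ ∑' n, B * |wd (k - n)| := by
        refine (summable_abs_mul_sub hwd hv k).tsum_le_tsum (fun n => ?_)
          (((Equiv.subLeft k).summable_iff.2 hwd).mul_left B)
        rw [abs_mul]
        exact mul_le_mul_of_nonneg_right (hB n) (abs_nonneg _)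
    _ = B * ∑' n, |wd n| := by
        rw [tsum_mul_left]
        exact congrArg _ ((Equiv.subLeft k).tsum_eq fun n => |wd n|)

theorem xiBar_add {v' : ℤ → ℤ} (hv' : BddZ v') :
    xiBar wd (fun n => v n + v' n) = fun k => xiBar wd v k + xiBar wd v' k := by
  funext k
  rw [xiBar, xiBar, xiBar, ← Summable.tsum_add (summable_abs_mul_sub hwd hv k).of_abs
    (summable_abs_mul_sub hwd hv' k).of_abs]
  exact tsum_congr fun n => by push_cast; ring

theorem fsR_xiBar {f : ℤ[X]} (hδ : fsR f wd = vDelta) (n : ℤ) :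
    fsR f (xiBar wd v) n = v n :=
  calc fsR f (xiBar wd v) n = ∑' m, (v m : ℝ) * fsR f wd (n - m) := by
        simp only [fsR, xiBar, ← tsum_mul_left, Finset.mul_sum]
        rw [← Summable.tsum_finsetSum
          (f := fun k m => (f.coeff k : ℝ) * ((v m : ℝ) * wd (n + k - m)))
          fun k _ => (summable_abs_mul_sub hwd hv (n + k)).of_abs.mul_left _]
        refine tsum_congr fun m => Finset.sum_congr rfl fun k _ => ?_
        rw [sub_add_eq_add_sub]
        ring
    _ = v n := by
        rw [hδ, tsum_eq_single n fun m hm => by simp [vDelta, sub_eq_zero, Ne.symm hm]]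
        simp [vDelta]

end

theorem xiBar_shiftZseq (wd : ℤ → ℝ) (v : ℤ → ℤ) :
    xiBar wd (shiftZseq v) = shiftR (xiBar wd v) := by
  funext k
  refine (tsum_congr fun n => ?_).trans
    ((Equiv.addRight (1 : ℤ)).tsum_eq fun m => (v m : ℝ) * wd (k + 1 - m))
  rw [Equiv.coe_addRight, add_sub_add_right_eq_sub]
  rfl

theorem exists_abs_le_one_coe_eq (t : Torus) : ∃ r : ℝ, |r| ≤ 1 ∧ (r : Torus) = t := by
  obtain ⟨y, rfl⟩ := QuotientAddGroup.mk_surjective t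
  refine ⟨Int.fract y, ?_, AddCircle.coe_fract y⟩
  rw [abs_of_nonneg (Int.fract_nonneg y)]
  exact (Int.fract_lt_one y).le

theorem fsT_rhoT (f : ℤ[X]) (w : ℤ → ℝ) : fsT f (rhoT w) = rhoT (fsR f w) := by
  funext n
  change _ = QuotientAddGroup.mk' _ (∑ k ∈ _, _)
  rw [map_sum]
  simp [fsT, rhoT, ← zsmul_eq_mul]

theorem rhoT_eq_zero_iff {w : ℤ → ℝ} : rhoT w = 0 ↔ ∃ u : ℤ → ℤ, w = fun n => (u n : ℝ) := by
  simp only [funext_iff, rhoT, Pi.zero_apply, AddCircle.coe_eq_zero_iff, zsmul_eq_mul, mul_one,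
    eq_comm (a := w _)]
  exact Classical.skolem

theorem mem_Xf_iff {f : ℤ[X]} {x : ℤ → Torus} : x ∈ Xf f ↔ fsT f x = 0 :=
  funext_iff.symm

section
variable {f : ℤ[X]} {wd : ℤ → ℝ} (hwd : Summable fun n => |wd n|) (hδ : fsR f wd = vDelta)
include hwd hδ

theorem rhoT_xiBar_mem_Xf {v : ℤ → ℤ} (hv : BddZ v) : rhoT (xiBar wd v) ∈ Xf f := by
  rw [mem_Xf_iff, fsT_rhoT, rhoT_eq_zero_iff]
  exact ⟨v, funext (fsR_xiBar hwd hv hδ)⟩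

variable (hf : ∀ θ : ℂ, aeval θ f = 0 → ‖θ‖ ≠ 1)
include hf

theorem xiBar_eq_of_fsR_eq {v : ℤ → ℤ} (hv : BddZ v) {w : ℤ → ℝ} (hw : Bdd w)
    (h : ∀ n, fsR f w n = v n) : xiBar wd v = w :=
  eq_of_bdd_of_fsR_eq hf (ne_zero_of_fsR_eq_vDelta hδ) (bdd_xiBar hwd hv) hw
    (funext fun n => (fsR_xiBar hwd hv hδ n).trans (h n).symm)

theorem exists_rhoT_xiBar_eq {x : ℤ → Torus} (hx : x ∈ Xf f) :
    ∃ v : ℤ → ℤ, BddZ v ∧ rhoT (xiBar wd v) = x := by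
  choose w hw1 hw2 using fun n => exists_abs_le_one_coe_eq (x n)
  have hwB : Bdd w := ⟨1, hw1⟩
  have hρ : rhoT w = x := funext hw2
  obtain ⟨v, hv⟩ := rhoT_eq_zero_iff.1 (by rwa [← fsT_rhoT, hρ, ← mem_Xf_iff])
  have hvB : BddZ v := .of_bdd_intCast (hv ▸ hwB.fsR f)
  exact ⟨v, hvB, by rw [xiBar_eq_of_fsR_eq hwd hδ hf hvB hwB (congrFun hv), hρ]⟩

theorem rhoT_xiBar_eq_zero_iff {v : ℤ → ℤ} (hv : BddZ v) :
    rhoT (xiBar wd v) = 0 ↔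
      ∃ u : ℤ → ℤ, BddZ u ∧ ∀ n, (v n : ℝ) = fsR f (fun m => (u m : ℝ)) n := by
  rw [rhoT_eq_zero_iff]
  constructor
  · rintro ⟨u, hu⟩
    refine ⟨u, .of_bdd_intCast (hu ▸ bdd_xiBar hwd hv), fun n => ?_⟩
    rw [← hu, fsR_xiBar hwd hv hδ]
  · rintro ⟨u, hu, hvu⟩
    exact ⟨u, xiBar_eq_of_fsR_eq hwd hδ hf hv hu.bdd_intCast fun n => (hvu n).symm⟩

end

theorem xiBar_properties_general (f : Polynomial ℤ)
    (hhyp : ∀ θ : ℂ, Polynomial.aeval θ f = 0 → ‖θ‖ ≠ 1)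
    (wd : ℤ → ℝ) (hwd : IsWdelta f wd) :
    -- (1) the series converges coordinatewise absolutely, to an element of `W_f`
    (∀ v : ℤ → ℤ, BddZ v → ∀ k : ℤ, Summable fun n : ℤ => |(v n : ℝ) * wd (k - n)|) ∧
    (∀ v : ℤ → ℤ, BddZ v → Bdd (xiBar wd v)) ∧
    -- `ξ̄` is additive and shift-equivariant
    (∀ v v' : ℤ → ℤ, BddZ v → BddZ v' →
      xiBar wd (fun n => v n + v' n) = fun k => xiBar wd v k + xiBar wd v' k) ∧
    (∀ v : ℤ → ℤ, BddZ v → xiBar wd (shiftZseq v) = shiftR (xiBar wd v)) ∧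
    -- `f(σ̄)(ξ̄(v)) = v`
    (∀ v : ℤ → ℤ, BddZ v → ∀ n : ℤ, fsR f (xiBar wd v) n = (v n : ℝ)) ∧
    -- consequently `V_f = f(σ̄)(W_f)` is all of `ℓ^∞(ℤ,ℤ)`
    (∀ v : ℤ → ℤ, BddZ v → ∃ w : ℤ → ℝ, Bdd w ∧ ∀ n, fsR f w n = (v n : ℝ)) ∧
    -- (2) `ξ = ρ ∘ ξ̄` maps into `X_f`, is surjective onto `X_f`,
    (∀ v : ℤ → ℤ, BddZ v → rhoT (xiBar wd v) ∈ Xf f) ∧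
    (∀ x ∈ Xf f, ∃ v : ℤ → ℤ, BddZ v ∧ rhoT (xiBar wd v) = x) ∧
    -- and its kernel is `f(σ̄)(ℓ^∞(ℤ,ℤ))`
    (∀ v : ℤ → ℤ, BddZ v → (rhoT (xiBar wd v) = 0 ↔
      ∃ u : ℤ → ℤ, BddZ u ∧ ∀ n, (v n : ℝ) = fsR f (fun m => (u m : ℝ)) n)) := by
  obtain ⟨hwB, hδ, -⟩ := hwd
  have hs := summable_abs_of_fsR_eq_vDelta hhyp hwB hδ
  exact ⟨fun v hv => summable_abs_mul_sub hs hv, fun v hv => bdd_xiBar hs hv,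
    fun v v' hv hv' => xiBar_add hs hv hv', fun v _ => xiBar_shiftZseq wd v,
    fun v hv => fsR_xiBar hs hv hδ, fun v hv => ⟨_, bdd_xiBar hs hv, fsR_xiBar hs hv hδ⟩,
    fun v hv => rhoT_xiBar_mem_Xf hs hδ hv, fun x hx => exists_rhoT_xiBar_eq hs hδ hhyp hx,
    fun v hv => rhoT_xiBar_eq_zero_iff hs hδ hhyp hv⟩

/-- properties of the homoclinic linearization map `ξ̄` and of
`ξ = ρ ∘ ξ̄` in the hyperbolic case. -/
theorem xiBar_properties (f : Polynomial ℤ) (hm : 1 ≤ f.natDegree)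
    (hlead : 0 < f.leadingCoeff) (h0 : f.coeff 0 ≠ 0)
    (hirr : Irreducible (Polynomial.toLaurent f)) (hnc : Noncyclotomic f)
    (hhyp : ∀ θ : ℂ, Polynomial.aeval θ f = 0 → ‖θ‖ ≠ 1)
    (wd : ℤ → ℝ) (hwd : IsWdelta f wd) :
    -- (1) the series converges coordinatewise absolutely, to an element of `W_f`
    (∀ v : ℤ → ℤ, BddZ v → ∀ k : ℤ, Summable fun n : ℤ => |(v n : ℝ) * wd (k - n)|) ∧
    (∀ v : ℤ → ℤ, BddZ v → Bdd (xiBar wd v)) ∧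
    -- `ξ̄` is additive and shift-equivariant
    (∀ v v' : ℤ → ℤ, BddZ v → BddZ v' →
      xiBar wd (fun n => v n + v' n) = fun k => xiBar wd v k + xiBar wd v' k) ∧
    (∀ v : ℤ → ℤ, BddZ v → xiBar wd (shiftZseq v) = shiftR (xiBar wd v)) ∧
    -- `f(σ̄)(ξ̄(v)) = v`
    (∀ v : ℤ → ℤ, BddZ v → ∀ n : ℤ, fsR f (xiBar wd v) n = (v n : ℝ)) ∧
    -- consequently `V_f = f(σ̄)(W_f)` is all of `ℓ^∞(ℤ,ℤ)`
    (∀ v : ℤ → ℤ, BddZ v → ∃ w : ℤ → ℝ, Bdd w ∧ ∀ n, fsR f w n = (v n : ℝ)) ∧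
    -- (2) `ξ = ρ ∘ ξ̄` maps into `X_f`, is surjective onto `X_f`,
    (∀ v : ℤ → ℤ, BddZ v → rhoT (xiBar wd v) ∈ Xf f) ∧
    (∀ x ∈ Xf f, ∃ v : ℤ → ℤ, BddZ v ∧ rhoT (xiBar wd v) = x) ∧
    -- and its kernel is `f(σ̄)(ℓ^∞(ℤ,ℤ))`
    (∀ v : ℤ → ℤ, BddZ v → (rhoT (xiBar wd v) = 0 ↔
      ∃ u : ℤ → ℤ, BddZ u ∧ ∀ n, (v n : ℝ) = fsR f (fun m => (u m : ℝ)) n)) :=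
  xiBar_properties_general f hhyp wd hwd

end
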